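/- Let Σ and Σ' be real symmetric positive definite n×n matrices, μ ∈ ℝ^n, q > 0, and define H(x) = q·xᵀΣx − μᵀx. Set x* = (1/(2q))·Σ⁻¹μ and x' = (1/(2q))·(Σ')⁻¹μ. Then |H(x*) − H(x')| ≤ (1/(4q))·‖μ‖²·‖(Σ')⁻¹‖²·‖Σ − Σ'‖²·‖Σ⁻¹‖, where ‖·‖ denotes the Euclidean norm on vectors and the spectral (operator) norm on matrices. -/

import Mathlib

/-!
Because `Σ` is symmetric and `x*` is its critical point, `H x - H x* = q (x - x*)ᵀ Σ (x - x*)`.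
The resolvent identity `(Σ')⁻¹ - Σ⁻¹ = (Σ')⁻¹ (Σ - Σ') Σ⁻¹` writes `x' - x* = M μ` with
`‖M‖ ≤ ‖(Σ')⁻¹‖ ‖Σ - Σ'‖ ‖Σ⁻¹‖ / (2q)`, while `Σ M = (Σ - Σ') (Σ')⁻¹ / (2q)`; Cauchy–Schwarz on
the pairing of `M μ` with `Σ M μ` gives the bound.
-/

open Matrix
open scoped Matrix.Norms.L2Operator

section

variable {ι : Type*} [Fintype ι]

def markowitzObjective {R : Type*} [CommRing R] (S : Matrix ι ι R) (μ : ι → R) (q : R)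
    (x : ι → R) : R :=
  q * (x ⬝ᵥ S *ᵥ x) - μ ⬝ᵥ x

theorem Matrix.IsSymm.dotProduct_mulVec_comm {R : Type*} [CommSemiring R] {S : Matrix ι ι R}
    (hS : S.IsSymm) (x y : ι → R) : x ⬝ᵥ S *ᵥ y = y ⬝ᵥ S *ᵥ x := by
  rw [dotProduct_mulVec, ← mulVec_transpose, hS.eq, dotProduct_comm]

theorem markowitzObjective_sub_of_critical {R : Type*} [CommRing R] {S : Matrix ι ι R}
    (hS : S.IsSymm) {μ x₀ : ι → R} {q : R} (hx₀ : (2 * q) • (S *ᵥ x₀) = μ) (x : ι → R) :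
    markowitzObjective S μ q x - markowitzObjective S μ q x₀
      = q * ((x - x₀) ⬝ᵥ S *ᵥ (x - x₀)) := by
  have hsymm := hS.dotProduct_mulVec_comm x₀ x
  simp only [markowitzObjective, ← hx₀, mulVec_sub, dotProduct_sub, sub_dotProduct,
    smul_dotProduct, smul_eq_mul, dotProduct_comm (S *ᵥ x₀)]
  linear_combination q * hsymm

theorem abs_dotProduct_le_norm_mul_norm (x y : ι → ℝ) :
    |x ⬝ᵥ y| ≤ ‖(EuclideanSpace.equiv ι ℝ).symm x‖ * ‖(EuclideanSpace.equiv ι ℝ).symm y‖ := by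
  simpa [EuclideanSpace.inner_toLp_toLp, dotProduct_comm] using
    abs_real_inner_le_norm ((EuclideanSpace.equiv ι ℝ).symm x) ((EuclideanSpace.equiv ι ℝ).symm y)

theorem abs_mulVec_dotProduct_mulVec_le [DecidableEq ι] (A B : Matrix ι ι ℝ) (x : ι → ℝ) :
    |A *ᵥ x ⬝ᵥ B *ᵥ x| ≤ ‖A‖ * ‖B‖ * ‖(EuclideanSpace.equiv ι ℝ).symm x‖ ^ 2 := by
  calc |A *ᵥ x ⬝ᵥ B *ᵥ x|
      ≤ ‖(EuclideanSpace.equiv ι ℝ).symm (A *ᵥ x)‖ * ‖(EuclideanSpace.equiv ι ℝ).symm (B *ᵥ x)‖ :=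
        abs_dotProduct_le_norm_mul_norm _ _
    _ ≤ (‖A‖ * ‖(EuclideanSpace.equiv ι ℝ).symm x‖) * (‖B‖ * ‖(EuclideanSpace.equiv ι ℝ).symm x‖) :=
        mul_le_mul (A.l2_opNorm_mulVec _) (B.l2_opNorm_mulVec _) (norm_nonneg _)
          (by positivity)
    _ = ‖A‖ * ‖B‖ * ‖(EuclideanSpace.equiv ι ℝ).symm x‖ ^ 2 := by ring

variable {𝕜 : Type*} [RCLike 𝕜] [DecidableEq ι] {A B : Matrix ι ι 𝕜}

theorem Matrix.l2_opNorm_inv_sub_inv_le (hA : IsUnit A) (hB : IsUnit B) :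
    ‖B⁻¹ - A⁻¹‖ ≤ ‖B⁻¹‖ * ‖A - B‖ * ‖A⁻¹‖ := by
  rw [inv_sub_inv (iff_of_true hB hA)]
  exact (norm_mul_le _ _).trans (by gcongr; exact norm_mul_le _ _)

theorem Matrix.l2_opNorm_mul_inv_sub_inv_le (hA : IsUnit A) (hB : IsUnit B) :
    ‖A * (B⁻¹ - A⁻¹)‖ ≤ ‖A - B‖ * ‖B⁻¹‖ := by
  rw [mul_sub, mul_nonsing_inv A (A.isUnit_iff_isUnit_det.mp hA),
    ← mul_nonsing_inv B (B.isUnit_iff_isUnit_det.mp hB), ← sub_mul]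
  exact norm_mul_le _ _

end

/-- Norm bound on the gap between the Markowitz objective at the true minimizer
`x* = (1/(2q))·Σ⁻¹μ` and at the minimizer `x' = (1/(2q))·(Σ')⁻¹μ` of the decomposed problem:
`|H(x*) − H(x')| ≤ (1/(4q))·‖μ‖²·‖(Σ')⁻¹‖²·‖Σ − Σ'‖²·‖Σ⁻¹‖`,
with the Euclidean norm on vectors and the spectral (ℓ²→ℓ² operator) norm on matrices. -/
theorem markowitz_gap_bound {n : ℕ} (S S' : Matrix (Fin n) (Fin n) ℝ)
    (hS : S.PosDef) (hS' : S'.PosDef)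
    (μ : Fin n → ℝ) (q : ℝ) (hq : 0 < q)
    (H : (Fin n → ℝ) → ℝ) (hH : ∀ x, H x = q * (x ⬝ᵥ S *ᵥ x) - μ ⬝ᵥ x)
    (xstar x' : Fin n → ℝ)
    (hxstar : xstar = (1 / (2 * q)) • (S⁻¹ *ᵥ μ))
    (hx' : x' = (1 / (2 * q)) • (S'⁻¹ *ᵥ μ)) :
    |H xstar - H x'|
      ≤ (1 / (4 * q)) * ‖(EuclideanSpace.equiv (Fin n) ℝ).symm μ‖ ^ 2
          * ‖S'⁻¹‖ ^ 2 * ‖S - S'‖ ^ 2 * ‖S⁻¹‖ := by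
  obtain rfl : H = markowitzObjective S μ q := funext hH
  set M := (1 / (2 * q)) • (S'⁻¹ - S⁻¹)
  have hcrit : (2 * q) • (S *ᵥ xstar) = μ := by
    rw [hxstar, mulVec_smul, mulVec_mulVec,
      mul_nonsing_inv S (S.isUnit_iff_isUnit_det.mp hS.isUnit), one_mulVec, smul_smul,
      mul_one_div_cancel (by positivity), one_smul]
  have hstep : x' - xstar = M *ᵥ μ := by
    rw [hx', hxstar, ← smul_sub, ← sub_mulVec, smul_mulVec]
  have hM : ‖M‖ ≤ 1 / (2 * q) * (‖S'⁻¹‖ * ‖S - S'‖ * ‖S⁻¹‖) := by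
    rw [norm_smul, Real.norm_of_nonneg (by positivity)]
    gcongr
    exact l2_opNorm_inv_sub_inv_le hS.isUnit hS'.isUnit
  have hSM : ‖S * M‖ ≤ 1 / (2 * q) * (‖S - S'‖ * ‖S'⁻¹‖) := by
    rw [mul_smul_comm, norm_smul, Real.norm_of_nonneg (by positivity)]
    gcongr
    exact l2_opNorm_mul_inv_sub_inv_le hS.isUnit hS'.isUnit
  calc _ = q * |M *ᵥ μ ⬝ᵥ (S * M) *ᵥ μ| := by
        rw [abs_sub_comm,
          markowitzObjective_sub_of_critical (isHermitian_iff_isSymm.mp hS.isHermitian) hcrit,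
          hstep, ← mulVec_mulVec, abs_mul, abs_of_pos hq]
    _ ≤ q * (‖M‖ * ‖S * M‖ * ‖(EuclideanSpace.equiv (Fin n) ℝ).symm μ‖ ^ 2) := by
        gcongr
        exact abs_mulVec_dotProduct_mulVec_le _ _ _
    _ ≤ q * ((1 / (2 * q) * (‖S'⁻¹‖ * ‖S - S'‖ * ‖S⁻¹‖)) * (1 / (2 * q) * (‖S - S'‖ * ‖S'⁻¹‖))
          * ‖(EuclideanSpace.equiv (Fin n) ℝ).symm μ‖ ^ 2) := by
        gcongr
    _ = 1 / (4 * q) * ‖(EuclideanSpace.equiv (Fin n) ℝ).symm μ‖ ^ 2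
          * ‖S'⁻¹‖ ^ 2 * ‖S - S'‖ ^ 2 * ‖S⁻¹‖ := by
        field_simp
        ring
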